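/- Let α ≥ −1/2. Then for every ξ ≥ 0, b_α·(max(𝔻_α, ξ))^{−α−1/2} ≤ ∫_{[0,1]} exp(−ξ·(1−s)) dΠ_α(s) ≤ B_α·(max(𝔻_α, ξ))^{−α−1/2}, where b_α := min(1, 2^{α−1/2})·(Γ(α+1)/√π)·e^{−𝔻_α} and B_α := max(1, 2^{α−1/2})·(Γ(α+1)/√π) for α > −1/2, and b_{−1/2} := 1/2 =: B_{−1/2}. -/
import Mathlib


open Real MeasureTheory
open scoped ENNReal

/-- The measure `dΠ_α` on `ℝ`: for `α > -1/2` it has density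
`u ↦ (Γ(α+1)/(√π·Γ(α+1/2)))·(1-u²)^{α-1/2}` on `[-1,1]`, and for `α = -1/2` it is
`(δ_{-1}+δ_1)/2`. -/
noncomputable def PiMeas (α : ℝ) : Measure ℝ :=
  if α = -1/2 then (2 : ℝ≥0∞)⁻¹ • (Measure.dirac (-1) + Measure.dirac 1)
  else
    (volume.restrict (Set.Icc (-1 : ℝ) 1)).withDensity fun u =>
      ENNReal.ofReal
        (Real.Gamma (α + 1) / (Real.sqrt π * Real.Gamma (α + 1/2)) * (1 - u ^ 2) ^ (α - 1/2))

/-- The constant `𝔻_α`. -/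
noncomputable def Dconst (α : ℝ) : ℝ :=
  if α = -1/2 then Real.exp (-Real.eulerMascheroniConstant)
  else Real.Gamma (α + 3/2) ^ ((α + 1/2)⁻¹)

/-- The lower constant `b_α`. -/
noncomputable def bconst (α : ℝ) : ℝ :=
  if α = -1/2 then 1/2
  else min 1 (2 ^ (α - 1/2)) * (Real.Gamma (α + 1) / Real.sqrt π) * Real.exp (-Dconst α)

/-- The upper constant `B_α`. -/
noncomputable def Bconst (α : ℝ) : ℝ :=
  if α = -1/2 then 1/2
  else max 1 (2 ^ (α - 1/2)) * (Real.Gamma (α + 1) / Real.sqrt π)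

section Aux

lemma auxII {κ : ℝ} (hκ : 0 < κ) (ξ a b : ℝ) :
    IntervalIntegrable (fun t : ℝ => Real.exp (-(ξ * t)) * t ^ (κ - 1)) volume a b :=
  (intervalIntegral.intervalIntegrable_rpow' (by linarith)).continuousOn_mul
    (Continuous.continuousOn (by fun_prop))

lemma auxEval {κ : ℝ} (hκ : 0 < κ) (r : ℝ) :
    ∫ t in (0:ℝ)..r, t ^ (κ - 1) = r ^ κ / κ := by
  rw [integral_rpow (Or.inl (by linarith)), sub_add_cancel,
    Real.zero_rpow hκ.ne', sub_zero]

lemma auxIoi {κ ξ : ℝ} (hκ : 0 < κ) (hξ : 0 < ξ) :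
    IntegrableOn (fun t : ℝ => Real.exp (-(ξ * t)) * t ^ (κ - 1)) (Set.Ioi 0) := by
  have h0 : IntegrableOn (fun x : ℝ => Real.exp (-x) * x ^ (κ - 1)) (Set.Ioi 0) :=
    Real.GammaIntegral_convergent hκ
  have h1 : IntegrableOn (fun x : ℝ => Real.exp (-(ξ * x)) * (ξ * x) ^ (κ - 1)) (Set.Ioi 0) := by
    have := (integrableOn_Ioi_comp_mul_left_iff
      (fun x : ℝ => Real.exp (-x) * x ^ (κ - 1)) 0 hξ).2
    rw [mul_zero] at this
    exact this h0
  have h2 := h1.const_mul (ξ ^ (-(κ - 1)))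
  apply IntegrableOn.congr_fun h2 _ measurableSet_Ioi
  intro x hx
  dsimp only
  rw [Real.mul_rpow hξ.le (le_of_lt hx)]
  rw [Real.rpow_neg hξ.le]
  field_simp [(Real.rpow_pos_of_pos hξ (κ-1)).ne']

lemma J_upper {κ ξ : ℝ} (hκ : 0 < κ) (hξ : 0 ≤ ξ) :
    (∫ t in (0:ℝ)..1, Real.exp (-(ξ * t)) * t ^ (κ - 1)) ≤
      Real.Gamma κ * (max (Real.Gamma (κ + 1) ^ κ⁻¹) ξ) ^ (-κ) := by
  set D : ℝ := Real.Gamma (κ + 1) ^ κ⁻¹ with hDdef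
  have hΓ1 : 0 < Real.Gamma (κ + 1) := Real.Gamma_pos_of_pos (by linarith)
  have hΓ : 0 < Real.Gamma κ := Real.Gamma_pos_of_pos hκ
  have hD : 0 < D := Real.rpow_pos_of_pos hΓ1 _
  have hDκ : D ^ κ = κ * Real.Gamma κ := by
    rw [hDdef, ← Real.rpow_mul hΓ1.le, inv_mul_cancel₀ hκ.ne', Real.rpow_one,
      Real.Gamma_add_one hκ.ne']
  rcases le_total ξ D with hc | hc
  · rw [max_eq_left hc]
    have h1 : (∫ t in (0:ℝ)..1, Real.exp (-(ξ * t)) * t ^ (κ - 1)) ≤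
        ∫ t in (0:ℝ)..1, t ^ (κ - 1) := by
      apply intervalIntegral.integral_mono_on zero_le_one (auxII hκ ξ 0 1)
        (intervalIntegral.intervalIntegrable_rpow' (by linarith))
      intro x hx
      calc Real.exp (-(ξ * x)) * x ^ (κ - 1) ≤ 1 * x ^ (κ - 1) := by
            apply mul_le_mul_of_nonneg_right _ (Real.rpow_nonneg hx.1 _)
            rw [Real.exp_le_one_iff]
            nlinarith [hx.1]
        _ = x ^ (κ - 1) := one_mul _
    rw [auxEval hκ 1, Real.one_rpow] at h1
    have h2 : Real.Gamma κ * D ^ (-κ) = 1 / κ := by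
      rw [Real.rpow_neg hD.le, hDκ]
      field_simp
    rw [h2]
    exact h1
  · rw [max_eq_right hc]
    have hξ0 : 0 < ξ := lt_of_lt_of_le hD hc
    have key : (∫ t in (0:ℝ)..1, Real.exp (-(ξ * t)) * t ^ (κ - 1)) ≤
        ∫ t in Set.Ioi (0:ℝ), Real.exp (-(ξ * t)) * t ^ (κ - 1) := by
      rw [intervalIntegral.integral_of_le zero_le_one]
      apply setIntegral_mono_set (auxIoi hκ hξ0)
      · filter_upwards [ae_restrict_mem measurableSet_Ioi] with x hx
        exact mul_nonneg (Real.exp_nonneg _) (Real.rpow_nonneg (le_of_lt hx) _)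
      · exact HasSubset.Subset.eventuallyLE Set.Ioc_subset_Ioi_self
    have hval : (∫ t in Set.Ioi (0:ℝ), Real.exp (-(ξ * t)) * t ^ (κ - 1)) =
        Real.Gamma κ * ξ ^ (-κ) := by
      have := integral_rpow_mul_exp_neg_mul_Ioi hκ hξ0
      rw [show (∫ t in Set.Ioi (0:ℝ), Real.exp (-(ξ * t)) * t ^ (κ - 1)) =
          ∫ t in Set.Ioi (0:ℝ), t ^ (κ - 1) * Real.exp (-(ξ * t)) by
        exact setIntegral_congr_fun measurableSet_Ioi fun x _ => mul_comm _ _, this,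
        one_div, Real.inv_rpow hξ0.le, ← Real.rpow_neg hξ0.le, mul_comm]
    rw [← hval]
    exact key

lemma J_lower {κ ξ : ℝ} (hκ : 0 < κ) (hξ : 0 ≤ ξ) :
    Real.Gamma κ * Real.exp (-(Real.Gamma (κ + 1) ^ κ⁻¹)) *
        (max (Real.Gamma (κ + 1) ^ κ⁻¹) ξ) ^ (-κ) ≤
      ∫ t in (0:ℝ)..1, Real.exp (-(ξ * t)) * t ^ (κ - 1) := by
  set D : ℝ := Real.Gamma (κ + 1) ^ κ⁻¹ with hDdef
  have hΓ1 : 0 < Real.Gamma (κ + 1) := Real.Gamma_pos_of_pos (by linarith)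
  have hΓ : 0 < Real.Gamma κ := Real.Gamma_pos_of_pos hκ
  have hD : 0 < D := Real.rpow_pos_of_pos hΓ1 _
  have hDκ : D ^ κ = κ * Real.Gamma κ := by
    rw [hDdef, ← Real.rpow_mul hΓ1.le, inv_mul_cancel₀ hκ.ne', Real.rpow_one,
      Real.Gamma_add_one hκ.ne']
  rcases le_total ξ D with hc | hc
  · rw [max_eq_left hc]
    have h1 : (∫ t in (0:ℝ)..1, Real.exp (-D) * t ^ (κ - 1)) ≤
        ∫ t in (0:ℝ)..1, Real.exp (-(ξ * t)) * t ^ (κ - 1) := by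
      apply intervalIntegral.integral_mono_on zero_le_one
        ((intervalIntegral.intervalIntegrable_rpow' (by linarith)).const_mul _)
        (auxII hκ ξ 0 1)
      intro x hx
      apply mul_le_mul_of_nonneg_right _ (Real.rpow_nonneg hx.1 _)
      apply Real.exp_le_exp.2
      nlinarith [hx.1, hx.2]
    rw [intervalIntegral.integral_const_mul, auxEval hκ 1, Real.one_rpow] at h1
    have h2 : Real.Gamma κ * Real.exp (-D) * D ^ (-κ) = Real.exp (-D) * (1 / κ) := by
      rw [Real.rpow_neg hD.le, hDκ]
      field_simp
    rw [h2]
    exact h1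
  · rw [max_eq_right hc]
    have hξ0 : 0 < ξ := lt_of_lt_of_le hD hc
    set r : ℝ := D / ξ with hrdef
    have hr0 : 0 < r := div_pos hD hξ0
    have hr1 : r ≤ 1 := (div_le_one hξ0).2 hc
    have hξr : ξ * r = D := by rw [hrdef, mul_comm, div_mul_cancel₀ D hξ0.ne']
    have step1 : (∫ t in (0:ℝ)..r, Real.exp (-(ξ * t)) * t ^ (κ - 1)) ≤
        ∫ t in (0:ℝ)..1, Real.exp (-(ξ * t)) * t ^ (κ - 1) := by
      rw [intervalIntegral.integral_of_le hr0.le, intervalIntegral.integral_of_le zero_le_one]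
      apply setIntegral_mono_set (auxII hκ ξ 0 1).1
      · filter_upwards [ae_restrict_mem measurableSet_Ioc] with x hx
        exact mul_nonneg (Real.exp_nonneg _) (Real.rpow_nonneg (le_of_lt hx.1) _)
      · exact HasSubset.Subset.eventuallyLE (Set.Ioc_subset_Ioc_right hr1)
    have step2 : (∫ t in (0:ℝ)..r, Real.exp (-D) * t ^ (κ - 1)) ≤
        ∫ t in (0:ℝ)..r, Real.exp (-(ξ * t)) * t ^ (κ - 1) := by
      apply intervalIntegral.integral_mono_on hr0.le
        ((intervalIntegral.intervalIntegrable_rpow' (by linarith)).const_mul _)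
        (auxII hκ ξ 0 r)
      intro x hx
      apply mul_le_mul_of_nonneg_right _ (Real.rpow_nonneg hx.1 _)
      apply Real.exp_le_exp.2
      nlinarith [hx.1, hx.2, mul_le_mul_of_nonneg_left hx.2 hξ0.le]
    have step3 : (∫ t in (0:ℝ)..r, Real.exp (-D) * t ^ (κ - 1)) =
        Real.Gamma κ * Real.exp (-D) * ξ ^ (-κ) := by
      rw [intervalIntegral.integral_const_mul, auxEval hκ r, hrdef,
        Real.div_rpow hD.le hξ0.le, hDκ, Real.rpow_neg hξ0.le]
      field_simp
    rw [← step3]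
    exact le_trans step2 step1

lemma reduce (α ξ : ℝ) (h : ¬ α = -1/2) (hα : -1/2 < α) :
    (∫ s in Set.Icc (0 : ℝ) 1, Real.exp (-ξ * (1 - s)) ∂(PiMeas α)) =
    ∫ x in Set.Icc (0:ℝ) 1,
      (Real.Gamma (α + 1) / (Real.sqrt π * Real.Gamma (α + 1/2)) * (1 - x ^ 2) ^ (α - 1/2))
        * Real.exp (-ξ * (1 - x)) := by
  set c : ℝ := Real.Gamma (α + 1) / (Real.sqrt π * Real.Gamma (α + 1/2)) with hc
  have hc0 : 0 ≤ c := by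
    apply div_nonneg (Real.Gamma_pos_of_pos (by linarith)).le
    exact (mul_pos (Real.sqrt_pos.2 Real.pi_pos) (Real.Gamma_pos_of_pos (by linarith))).le
  have hmeas : Measurable fun u : ℝ => Real.toNNReal (c * (1 - u ^ 2) ^ (α - 1/2)) := by
    apply Measurable.real_toNNReal
    exact (((measurable_const.sub (measurable_id.pow_const 2)).pow measurable_const).const_mul c)
  rw [PiMeas, if_neg h]
  rw [show (fun u : ℝ => ENNReal.ofReal (c * (1 - u ^ 2) ^ (α - 1/2))) =
      (fun u : ℝ => ((Real.toNNReal (c * (1 - u ^ 2) ^ (α - 1/2)) : NNReal) : ℝ≥0∞)) from rfl]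
  rw [setIntegral_withDensity_eq_setIntegral_smul₀ hmeas.aemeasurable _ measurableSet_Icc]
  rw [Measure.restrict_restrict measurableSet_Icc,
    Set.inter_eq_left.2 (Set.Icc_subset_Icc (by norm_num) le_rfl)]
  apply setIntegral_congr_fun measurableSet_Icc
  intro x hx
  have h1 : (0:ℝ) ≤ 1 - x ^ 2 := by nlinarith [hx.1, hx.2]
  have h2 : 0 ≤ c * (1 - x ^ 2) ^ (α - 1/2) :=
    mul_nonneg hc0 (Real.rpow_nonneg h1 _)
  simp only [NNReal.smul_def, smul_eq_mul, Real.coe_toNNReal _ h2]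

end Aux


theorem pi_measure_laplace_bounds (α : ℝ) (hα : -1/2 ≤ α) (ξ : ℝ) (hξ : 0 ≤ ξ) :
    bconst α * (max (Dconst α) ξ) ^ (-α - 1/2) ≤
      ∫ s in Set.Icc (0 : ℝ) 1, Real.exp (-ξ * (1 - s)) ∂(PiMeas α) ∧
    (∫ s in Set.Icc (0 : ℝ) 1, Real.exp (-ξ * (1 - s)) ∂(PiMeas α)) ≤
      Bconst α * (max (Dconst α) ξ) ^ (-α - 1/2) := by

  by_cases hspec : α = -1/2
  · subst hspec
    have hI : (∫ s in Set.Icc (0 : ℝ) 1, Real.exp (-ξ * (1 - s))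
        ∂(PiMeas (-1/2))) = 1/2 := by
      rw [PiMeas, if_pos rfl, Measure.restrict_smul, MeasureTheory.integral_smul_measure,
        Measure.restrict_add, MeasureTheory.restrict_dirac' measurableSet_Icc,
        MeasureTheory.restrict_dirac' measurableSet_Icc]
      rw [if_neg (by norm_num : ¬((-1:ℝ) ∈ Set.Icc (0:ℝ) 1)),
        if_pos (by norm_num : (1:ℝ) ∈ Set.Icc (0:ℝ) 1)]
      rw [zero_add, integral_dirac]
      norm_num
    rw [hI, bconst, Bconst, if_pos rfl, if_pos rfl,
      show -(-1/2 : ℝ) - 1/2 = 0 by norm_num, Real.rpow_zero, mul_one]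
    exact ⟨le_refl _, le_refl _⟩
  · have hα' : -1/2 < α := lt_of_le_of_ne hα (Ne.symm hspec)
    have hκ : 0 < α + 1/2 := by linarith
    rw [reduce α ξ hspec hα', bconst, Bconst, if_neg hspec, if_neg hspec, Dconst, if_neg hspec]
    rw [MeasureTheory.integral_Icc_eq_integral_Ioc,
      ← intervalIntegral.integral_of_le zero_le_one]
    simp only [neg_mul]
    set κ : ℝ := α + 1/2 with hκdef
    rw [show α - 1/2 = κ - 1 by rw [hκdef]; ring,
      show α + 3/2 = κ + 1 by rw [hκdef]; ring,
      show -α - 1/2 = -κ by rw [hκdef]; ring]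
    set c : ℝ := Real.Gamma (α + 1) / (Real.sqrt π * Real.Gamma κ) with hc
    have hΓκ : 0 < Real.Gamma κ := Real.Gamma_pos_of_pos hκ
    have hsπ : 0 < Real.sqrt π := Real.sqrt_pos.2 Real.pi_pos
    have hΓα : 0 < Real.Gamma (α + 1) := Real.Gamma_pos_of_pos (by linarith)
    have hc0 : 0 < c := div_pos hΓα (mul_pos hsπ hΓκ)
    have hcΓ : c * Real.Gamma κ = Real.Gamma (α + 1) / Real.sqrt π := by
      rw [hc]; field_simp
    -- rewrite integrand in product form
    have hprod : (∫ x in (0:ℝ)..1, (c * (1 - x ^ 2) ^ (κ - 1)) * Real.exp (-(ξ * (1 - x)))) =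
        c * ∫ x in (0:ℝ)..1,
          (1 - x) ^ (κ - 1) * ((1 + x) ^ (κ - 1) * Real.exp (-(ξ * (1 - x)))) := by
      rw [← intervalIntegral.integral_const_mul]
      apply intervalIntegral.integral_congr
      intro x hx
      rw [Set.uIcc_of_le zero_le_one] at hx
      dsimp only
      rw [show (1 - x ^ 2 : ℝ) = (1 - x) * (1 + x) by ring,
        Real.mul_rpow (by linarith [hx.2]) (by linarith [hx.1])]
      ring
    rw [hprod]
    -- integrability
    have base : IntervalIntegrable (fun x : ℝ => (1 - x) ^ (κ - 1)) volume 0 1 := by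
      have h := intervalIntegral.intervalIntegrable_rpow'
        (show (-1:ℝ) < κ - 1 by linarith) (a := 1) (b := 0)
      have h2 := h.comp_sub_left 1
      simpa using h2
    have intG : ∀ ψ : ℝ → ℝ, ContinuousOn ψ (Set.uIcc 0 1) →
        IntervalIntegrable (fun x : ℝ => (1 - x) ^ (κ - 1) * ψ x) volume 0 1 :=
      fun ψ hψ => base.mul_continuousOn hψ
    have contψ : ContinuousOn (fun x : ℝ => (1 + x) ^ (κ - 1) * Real.exp (-(ξ * (1 - x))))
        (Set.uIcc 0 1) := by
      apply ContinuousOn.mul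
      · apply ContinuousOn.rpow_const (Continuous.continuousOn (by fun_prop))
        intro x hx
        rw [Set.uIcc_of_le zero_le_one] at hx
        exact Or.inl (ne_of_gt (by linarith [hx.1]))
      · exact Continuous.continuousOn (by fun_prop)
    have contm : ∀ m : ℝ, ContinuousOn (fun x : ℝ => m * Real.exp (-(ξ * (1 - x))))
        (Set.uIcc 0 1) := fun m => Continuous.continuousOn (by fun_prop)
    -- change of variables
    have evalm : ∀ m : ℝ, (∫ x in (0:ℝ)..1,
        (1 - x) ^ (κ - 1) * (m * Real.exp (-(ξ * (1 - x))))) =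
        m * ∫ t in (0:ℝ)..1, Real.exp (-(ξ * t)) * t ^ (κ - 1) := by
      intro m
      have hcomp := intervalIntegral.integral_comp_sub_left (a := 0) (b := 1)
        (fun u : ℝ => u ^ (κ - 1) * (m * Real.exp (-(ξ * u)))) 1
      simp only [sub_self, sub_zero] at hcomp
      rw [hcomp, ← intervalIntegral.integral_const_mul]
      apply intervalIntegral.integral_congr
      intro x _
      dsimp only
      ring
    -- pointwise bounds
    set m₁ : ℝ := min 1 (2 ^ (κ - 1)) with hm₁
    set m₂ : ℝ := max 1 (2 ^ (κ - 1)) with hm₂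
    have hm₁0 : 0 < m₁ := lt_min one_pos (Real.rpow_pos_of_pos two_pos _)
    have hm₂0 : 0 < m₂ := lt_of_lt_of_le one_pos (le_max_left _ _)
    have hpt : ∀ x ∈ Set.Icc (0:ℝ) 1, m₁ ≤ (1 + x) ^ (κ - 1) ∧ (1 + x) ^ (κ - 1) ≤ m₂ := by
      intro x hx
      rcases le_or_gt 0 (κ - 1) with hb | hb
      · constructor
        · calc m₁ ≤ 1 := min_le_left _ _
            _ = (1:ℝ) ^ (κ - 1) := (Real.one_rpow _).symm
            _ ≤ (1 + x) ^ (κ - 1) := Real.rpow_le_rpow zero_le_one (by linarith [hx.1]) hb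
        · calc (1 + x) ^ (κ - 1) ≤ 2 ^ (κ - 1) :=
              Real.rpow_le_rpow (by linarith [hx.1]) (by linarith [hx.2]) hb
            _ ≤ m₂ := le_max_right _ _
      · constructor
        · calc m₁ ≤ 2 ^ (κ - 1) := min_le_right _ _
            _ ≤ (1 + x) ^ (κ - 1) :=
              Real.rpow_le_rpow_of_nonpos (by linarith [hx.1]) (by linarith [hx.2]) hb.le
        · calc (1 + x) ^ (κ - 1) ≤ (1:ℝ) ^ (κ - 1) :=
              Real.rpow_le_rpow_of_nonpos one_pos (by linarith [hx.1]) hb.le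
            _ = 1 := Real.one_rpow _
            _ ≤ m₂ := le_max_left _ _
    have mono_lo : (∫ x in (0:ℝ)..1,
        (1 - x) ^ (κ - 1) * (m₁ * Real.exp (-(ξ * (1 - x))))) ≤
        ∫ x in (0:ℝ)..1,
          (1 - x) ^ (κ - 1) * ((1 + x) ^ (κ - 1) * Real.exp (-(ξ * (1 - x)))) := by
      apply intervalIntegral.integral_mono_on zero_le_one (intG _ (contm m₁)) (intG _ contψ)
      intro x hx
      apply mul_le_mul_of_nonneg_left _ (Real.rpow_nonneg (by linarith [hx.2]) _)
      exact mul_le_mul_of_nonneg_right (hpt x hx).1 (Real.exp_nonneg _)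
    have mono_hi : (∫ x in (0:ℝ)..1,
        (1 - x) ^ (κ - 1) * ((1 + x) ^ (κ - 1) * Real.exp (-(ξ * (1 - x))))) ≤
        ∫ x in (0:ℝ)..1,
          (1 - x) ^ (κ - 1) * (m₂ * Real.exp (-(ξ * (1 - x)))) := by
      apply intervalIntegral.integral_mono_on zero_le_one (intG _ contψ) (intG _ (contm m₂))
      intro x hx
      apply mul_le_mul_of_nonneg_left _ (Real.rpow_nonneg (by linarith [hx.2]) _)
      exact mul_le_mul_of_nonneg_right (hpt x hx).2 (Real.exp_nonneg _)
    rw [evalm m₁] at mono_lo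
    rw [evalm m₂] at mono_hi
    have hJu := J_upper hκ hξ
    have hJl := J_lower hκ hξ
    set J : ℝ := ∫ t in (0:ℝ)..1, Real.exp (-(ξ * t)) * t ^ (κ - 1) with hJ
    set M : ℝ := max (Real.Gamma (κ + 1) ^ κ⁻¹) ξ with hM
    set D : ℝ := Real.Gamma (κ + 1) ^ κ⁻¹ with hD
    constructor
    · calc m₁ * (Real.Gamma (α + 1) / Real.sqrt π) * Real.exp (-D) * M ^ (-κ)
          = c * (m₁ * (Real.Gamma κ * Real.exp (-D) * M ^ (-κ))) := by
            rw [← hcΓ]; ring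
        _ ≤ c * (m₁ * J) := by
            apply mul_le_mul_of_nonneg_left _ hc0.le
            exact mul_le_mul_of_nonneg_left hJl hm₁0.le
        _ ≤ c * ∫ x in (0:ℝ)..1,
              (1 - x) ^ (κ - 1) * ((1 + x) ^ (κ - 1) * Real.exp (-(ξ * (1 - x)))) :=
            mul_le_mul_of_nonneg_left mono_lo hc0.le
    · calc c * ∫ x in (0:ℝ)..1,
              (1 - x) ^ (κ - 1) * ((1 + x) ^ (κ - 1) * Real.exp (-(ξ * (1 - x))))
          ≤ c * (m₂ * J) := mul_le_mul_of_nonneg_left mono_hi hc0.le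
        _ ≤ c * (m₂ * (Real.Gamma κ * M ^ (-κ))) := by
            apply mul_le_mul_of_nonneg_left _ hc0.le
            exact mul_le_mul_of_nonneg_left hJu hm₂0.le
        _ = m₂ * (Real.Gamma (α + 1) / Real.sqrt π) * M ^ (-κ) := by
            rw [← hcΓ]; ring
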